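/- Let q ≥ 2 be a prime power. For every fixed integer r we have lim_{m→∞} binom(2m, m−r)_q / S(2m) = q^{−r²} / θ₃(q^{−1}) and lim_{m→∞} binom(2m+1, m−r)_q / S(2m+1) = q^{−(r+1/2)²} / θ₂(q^{−1}); that is, the shifted distributions P^e_m(r) = p(m−r, 2m) and P^o_m(r+1/2) = p(m−r, 2m+1) converge pointwise to the discrete Gaussian θ₃ and θ₂ distributions with nome 1/q, respectively. -/

import Mathlib

open Filter Matrix
open scoped Topology

/-- The `q`-binomial coefficient `binom(n,k)_q = ∏_{j=0}^{k-1} (q^{n-j}-1)/(q^{k-j}-1)`. -/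
noncomputable def qBinom (q n k : ℕ) : ℝ :=
  ∏ j ∈ Finset.range k, ((q : ℝ) ^ (n - j) - 1) / ((q : ℝ) ^ (k - j) - 1)

/-- `S(n) = ∑_{k=0}^n binom(n,k)_q`. -/
noncomputable def Sq (q n : ℕ) : ℝ := ∑ k ∈ Finset.range (n + 1), qBinom q n k

/-- `K_q = ∏_{j=1}^∞ (1 - q^{-j})`. -/
noncomputable def Kq (q : ℕ) : ℝ := ∏' j : ℕ, (1 - ((q : ℝ))⁻¹ ^ (j + 1))

/-- `K_q(k) = ∏_{j=1}^{k} (1 - q^{-j})`. -/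
noncomputable def KqTrunc (q k : ℕ) : ℝ := ∏ j ∈ Finset.range k, (1 - ((q : ℝ))⁻¹ ^ (j + 1))

/-- Jacobi theta constant `θ₂(w) = ∑_{k∈ℤ} w^{(k+1/2)²}`. -/
noncomputable def theta2 (w : ℝ) : ℝ := ∑' k : ℤ, w ^ (((k : ℝ) + 1/2) ^ 2)

/-- Jacobi theta constant `θ₃(w) = ∑_{k∈ℤ} w^{k²}`. -/
noncomputable def theta3 (w : ℝ) : ℝ := ∑' k : ℤ, w ^ ((k : ℝ) ^ 2)

/-- Condition (⋆): `n²/4 − ε·n + A·√n − k(n)(n−k(n)) → −∞`. -/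
def StarCond (A ε : ℝ) (k : ℕ → ℕ) : Prop :=
  Tendsto (fun n : ℕ =>
    (n : ℝ) ^ 2 / 4 - ε * n + A * Real.sqrt n - (k n : ℝ) * ((n : ℝ) - (k n : ℝ)))
    atTop atBot

/-- The set of permutation matrices inside `GL n F`. -/
def permSet (F : Type) [Field F] (n : ℕ) : Set (GL (Fin n) F) :=
  {M | ∃ σ : Equiv.Perm (Fin n), (M : Matrix (Fin n) (Fin n) F) = σ.permMatrix F}

/-- The set of invertible diagonal matrices inside `GL n F`. -/
def diagSet (F : Type) [Field F] (n : ℕ) : Set (GL (Fin n) F) :=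
  {M | ∃ d : Fin n → F, (M : Matrix (Fin n) (Fin n) F) = Matrix.diagonal d}

/-- The permutation group: subgroup of `GL n F` formed by the permutation matrices. -/
def PermGroup (F : Type) [Field F] (n : ℕ) : Subgroup (GL (Fin n) F) :=
  Subgroup.closure (permSet F n)

/-- The monomial group: subgroup of `GL n F` generated by permutation and diagonal matrices. -/
def MonomialGroup (F : Type) [Field F] (n : ℕ) : Subgroup (GL (Fin n) F) :=
  Subgroup.closure (permSet F n ∪ diagSet F n)

/-- Number of orbits of a subgroup `G ≤ GL n F` acting on the Grassmannian of
`k`-dimensional subspaces of `F^n` (by taking images of subspaces). -/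
noncomputable def numClassesDim {n : ℕ} (F : Type) [Field F]
    (G : Subgroup (GL (Fin n) F)) (k : ℕ) : ℕ :=
  Nat.card (Quot (fun V W : {V : Submodule F (Fin n → F) // Module.finrank F V = k} =>
    ∃ M ∈ G, Submodule.map (Matrix.toLin' (M : Matrix (Fin n) (Fin n) F)) V.1 = W.1))

/-- Number of orbits of a subgroup `G ≤ GL n F` acting on the set of all subspaces of `F^n`. -/
noncomputable def numClasses {n : ℕ} (F : Type) [Field F]
    (G : Subgroup (GL (Fin n) F)) : ℕ :=
  Nat.card (Quot (fun V W : Submodule F (Fin n → F) =>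
    ∃ M ∈ G, Submodule.map (Matrix.toLin' (M : Matrix (Fin n) (Fin n) F)) V = W))

/-- Semilinear orbit relation: `W` is the image of `V` under the semilinear transformation
given by applying the field automorphism `σ` componentwise followed by a monomial matrix. -/
def semiRel (F : Type) [Field F] (n : ℕ) (V W : Submodule F (Fin n → F)) : Prop :=
  ∃ σ : F ≃+* F, ∃ M ∈ MonomialGroup F n,
    (W : Set (Fin n → F)) =
      (fun x => Matrix.mulVec (M : Matrix (Fin n) (Fin n) F) (fun i => σ (x i))) '' (V : Set (Fin n → F))

/-- Number of semilinear equivalence classes of `k`-dimensional subspaces of `F^n`. -/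
noncomputable def numClassesDimSemi (F : Type) [Field F] (n k : ℕ) : ℕ :=
  Nat.card (Quot (fun V W : {V : Submodule F (Fin n → F) // Module.finrank F V = k} =>
    semiRel F n V.1 W.1))

/-- Number of semilinear equivalence classes of subspaces of `F^n`. -/
noncomputable def numClassesSemi (F : Type) [Field F] (n : ℕ) : ℕ :=
  Nat.card (Quot (fun V W : Submodule F (Fin n → F) => semiRel F n V W))

/-- `binom(n,k)_q` extended to integer `k`, equal to `0` for `k ∉ [0,n]`. -/
noncomputable def qBinomZ (q n : ℕ) (k : ℤ) : ℝ :=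
  if 0 ≤ k ∧ k ≤ (n : ℤ) then qBinom q n k.toNat else 0

/-!
With `K(n) = ∏_{j=1}^n (1 - q^{-j})` one has `binom(n,k)_q = q^{k(n-k)} K(n) / (K(k) K(n-k))`.
For `n = 2m + c` and `k = m - s` the exponent is `m² + cm - (s² + cs)`, so after dividing by
the common factor `q^{m²+cm} K(2m+c)` the coefficients become
`q^{-(s²+cs)} / (K(m-s) K(m+c+s))`. These tend to `q^{-(s²+cs)} / K_q²` and, since every
`K(n) ≥ 1/4`, are dominated by `16 q^{-(s²+cs)}`; dominated convergence for the sum over `s`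
gives the limit `q^{-(r²+cr)} / ∑_s q^{-(s²+cs)}`, which for `c = 0, 1` is the θ₃ resp. θ₂ law.
-/

open Finset

section Real

variable {x : ℝ}

-- `(1 - x)(1 - x² - ⋯ - x^(n+1))`: splitting off the first factor keeps the bound positive
-- up to `x = 1/2`.
theorem one_sub_sub_sq_add_pow_le_prod_one_sub_pow (hx0 : 0 ≤ x) (hx1 : x ≤ 1) (n : ℕ) :
    1 - x - x ^ 2 + x ^ (n + 2) ≤ ∏ j ∈ range (n + 1), (1 - x ^ (j + 1)) := by
  induction n with
  | zero => simp
  | succ n ih =>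
    have hy0 : 0 ≤ x ^ (n + 2) := pow_nonneg hx0 _
    have hy1 : x ^ (n + 2) ≤ 1 := pow_le_one₀ hx0 hx1
    have hyx : x ^ (n + 2) ≤ x ^ 2 := pow_le_pow_of_le_one hx0 hx1 (by omega)
    rw [prod_range_succ]
    calc 1 - x - x ^ 2 + x ^ (n + 1 + 2)
        ≤ (1 - x - x ^ 2 + x ^ (n + 2)) * (1 - x ^ (n + 2)) := by
          rw [show n + 1 + 2 = n + 2 + 1 by ring, pow_succ _ (n + 2)]
          nlinarith [mul_nonneg hy0 (sub_nonneg.2 hyx)]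
      _ ≤ _ := mul_le_mul_of_nonneg_right ih (by linarith)

theorem one_sub_sub_sq_le_prod_one_sub_pow (hx0 : 0 ≤ x) (hx1 : x ≤ 1) (n : ℕ) :
    1 - x - x ^ 2 ≤ ∏ j ∈ range n, (1 - x ^ (j + 1)) := by
  cases n with
  | zero => simp only [range_zero, prod_empty]; nlinarith
  | succ n =>
    linarith [one_sub_sub_sq_add_pow_le_prod_one_sub_pow hx0 hx1 n, pow_nonneg hx0 (n + 2)]

theorem summable_pow_natAbs (hx0 : 0 ≤ x) (hx1 : x < 1) : Summable fun s : ℤ => x ^ s.natAbs :=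
  Summable.of_nat_of_neg (by simpa using summable_geometric_of_lt_one hx0 hx1)
    (by simpa using summable_geometric_of_lt_one hx0 hx1)

theorem summable_zpow_neg_sq_add_mul (hx : 1 < x) (c : ℤ) :
    Summable fun s : ℤ => x ^ (-(s ^ 2 + c * s)) := by
  have hx0 : 0 < x := by linarith
  refine Summable.of_nonneg_of_le (fun s => by positivity) (fun s => ?_)
    ((summable_pow_natAbs (inv_nonneg.2 hx0.le) (inv_lt_one_of_one_lt₀ hx)).mul_left
      (x ^ ((|c| + 1) ^ 2)))
  have hexp : -(s ^ 2 + c * s) ≤ (|c| + 1) ^ 2 + -|s| := by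
    have : -(|c| * |s|) ≤ c * s := by rw [← abs_mul]; exact neg_abs_le _
    nlinarith [sq_abs s, sq_nonneg (|s| - (|c| + 1)), abs_nonneg s, abs_nonneg c]
  calc x ^ (-(s ^ 2 + c * s)) ≤ x ^ ((|c| + 1) ^ 2 + -|s|) := zpow_le_zpow_right₀ hx.le hexp
    _ = x ^ ((|c| + 1) ^ 2) * x⁻¹ ^ s.natAbs := by
      rw [zpow_add₀ hx0.ne', inv_pow, ← zpow_natCast, Int.natCast_natAbs, _root_.zpow_neg]

theorem theta3_inv_eq : theta3 x⁻¹ = ∑' k : ℤ, x ^ (-k ^ 2) :=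
  tsum_congr fun k => by
    rw [show (k : ℝ) ^ 2 = ((k ^ 2 : ℤ) : ℝ) by push_cast; ring, Real.rpow_intCast,
      _root_.inv_zpow']

theorem rpow_neg_add_half_sq (hx : 0 < x) (k : ℤ) :
    x ^ (-((k : ℝ) + 1 / 2) ^ 2) = x ^ (-(1 / 4 : ℝ)) * x ^ (-(k ^ 2 + k)) := by
  rw [show -((k : ℝ) + 1 / 2) ^ 2 = -(1 / 4) + ((-(k ^ 2 + k) : ℤ) : ℝ) by push_cast; ring,
    Real.rpow_add hx, Real.rpow_intCast]

theorem theta2_inv_eq (hx : 0 < x) :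
    theta2 x⁻¹ = x ^ (-(1 / 4 : ℝ)) * ∑' k : ℤ, x ^ (-(k ^ 2 + k)) := by
  rw [theta2, ← tsum_mul_left]
  exact tsum_congr fun k => by
    rw [Real.inv_rpow hx.le, ← Real.rpow_neg hx.le, rpow_neg_add_half_sq hx]

end Real

theorem tendsto_div_tsum_of_dominated_convergence {α β 𝕜 : Type*} [NormedField 𝕜]
    [CompleteSpace 𝕜] {l : Filter α} {f : α → β → 𝕜} {g : β → 𝕜} {bound : β → ℝ}
    (h_sum : Summable bound) (hlim : ∀ b, Tendsto (f · b) l (𝓝 (g b)))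
    (h_bound : ∀ᶠ a in l, ∀ b, ‖f a b‖ ≤ bound b) (hg : ∑' b, g b ≠ 0) (b₀ : β) :
    Tendsto (fun a => f a b₀ / ∑' b, f a b) l (𝓝 (g b₀ / ∑' b, g b)) :=
  (hlim b₀).div (tendsto_tsum_of_dominated_convergence h_sum hlim h_bound) hg

section QAnalogues

variable {q : ℕ}

theorem quarter_le_KqTrunc (hq : 1 < q) (n : ℕ) : 1 / 4 ≤ KqTrunc q n := by
  have hq2 : (2 : ℝ) ≤ q := by exact_mod_cast hq
  have hw0 : 0 ≤ ((q : ℝ))⁻¹ := by positivity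
  have hw : ((q : ℝ))⁻¹ ≤ 1 / 2 := by rw [one_div]; exact inv_anti₀ two_pos hq2
  exact le_trans (by nlinarith) (one_sub_sub_sq_le_prod_one_sub_pow hw0 (by linarith) n)

theorem KqTrunc_pos (hq : 1 < q) (n : ℕ) : 0 < KqTrunc q n :=
  lt_of_lt_of_le (by norm_num) (quarter_le_KqTrunc hq n)

theorem tendsto_KqTrunc (hq : 1 < q) : Tendsto (KqTrunc q) atTop (𝓝 (Kq q)) := by
  have hw : ‖((q : ℝ))⁻¹‖ < 1 := by
    rw [norm_inv, Real.norm_natCast]; exact inv_lt_one_of_one_lt₀ (by exact_mod_cast hq)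
  have hK : Multipliable fun j : ℕ => 1 - ((q : ℝ))⁻¹ ^ (j + 1) := by
    refine multipliable_one_add_of_summable (f := fun j => -((q : ℝ))⁻¹ ^ (j + 1)) ?_
    simpa using (summable_nat_add_iff 1).2 (summable_geometric_of_lt_one (norm_nonneg _) hw)
  exact hK.hasProd.tendsto_prod_nat

theorem quarter_le_Kq (hq : 1 < q) : 1 / 4 ≤ Kq q :=
  ge_of_tendsto' (tendsto_KqTrunc hq) (quarter_le_KqTrunc hq)

theorem Kq_pos (hq : 1 < q) : 0 < Kq q :=
  lt_of_lt_of_le (by norm_num) (quarter_le_Kq hq)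

theorem KqTrunc_add (a b : ℕ) :
    KqTrunc q (a + b) = KqTrunc q a * ∏ i ∈ range b, (1 - ((q : ℝ))⁻¹ ^ (a + i + 1)) :=
  prod_range_add _ a b

theorem pow_sub_one_eq_mul_one_sub_inv_pow {K : Type*} [Field K] {x : K} (hx : x ≠ 0) (a : ℕ) :
    x ^ a - 1 = x ^ a * (1 - x⁻¹ ^ a) := by
  rw [mul_sub, mul_one, ← mul_pow, mul_inv_cancel₀ hx, one_pow]

theorem qBinom_eq (hq : 1 < q) {n k : ℕ} (hk : k ≤ n) :
    qBinom q n k = (q : ℝ) ^ (k * (n - k)) * KqTrunc q n / (KqTrunc q k * KqTrunc q (n - k)) := by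
  have hq0 : (q : ℝ) ≠ 0 := by positivity
  have hfactor : ∀ j ∈ range k, ((q : ℝ) ^ (n - j) - 1) / ((q : ℝ) ^ (k - j) - 1)
      = (q : ℝ) ^ (n - k) * ((1 - ((q : ℝ))⁻¹ ^ (n - j)) / (1 - ((q : ℝ))⁻¹ ^ (k - j))) := by
    intro j hj
    have hj : j < k := mem_range.1 hj
    rw [pow_sub_one_eq_mul_one_sub_inv_pow hq0, pow_sub_one_eq_mul_one_sub_inv_pow hq0,
      mul_div_mul_comm, show n - j = n - k + (k - j) by omega, pow_add,
      mul_div_assoc, div_self (pow_ne_zero _ hq0), mul_one]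
  have hden : ∏ j ∈ range k, (1 - ((q : ℝ))⁻¹ ^ (k - j)) = KqTrunc q k := by
    rw [KqTrunc, ← prod_range_reflect]
    exact prod_congr rfl fun j hj => by
      rw [show k - (k - 1 - j) = j + 1 by have := mem_range.1 hj; omega]
  have hnum : ∏ j ∈ range k, (1 - ((q : ℝ))⁻¹ ^ (n - j)) = KqTrunc q n / KqTrunc q (n - k) := by
    rw [eq_div_iff (KqTrunc_pos hq _).ne', mul_comm, ← Nat.sub_add_cancel hk, KqTrunc_add,
      Nat.add_sub_cancel, ← prod_range_reflect]
    exact congrArg _ (prod_congr rfl fun j hj => by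
      rw [show n - k + k - (k - 1 - j) = n - k + j + 1 by have := mem_range.1 hj; omega])
  rw [qBinom, prod_congr rfl hfactor, prod_mul_distrib, prod_const, card_range, prod_div_distrib,
    hden, hnum, ← pow_mul, mul_comm (n - k)]
  field_simp [(KqTrunc_pos hq k).ne', (KqTrunc_pos hq (n - k)).ne']

theorem Sq_eq_tsum_qBinomZ (n : ℕ) : Sq q n = ∑' k : ℤ, qBinomZ q n k := by
  rw [tsum_eq_sum (s := (range (n + 1)).map Nat.castEmbedding), sum_map, Sq]
  · refine sum_congr rfl fun k hk => ?_
    have hk : k ≤ n := Nat.lt_succ_iff.1 (mem_range.1 hk)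
    simp [qBinomZ, hk]
  · intro k hk
    refine if_neg fun ⟨h0, hn⟩ => hk (mem_map.2 ⟨k.toNat, mem_range.2 (by omega), ?_⟩)
    simp [h0]

noncomputable def scaledQBinom (q c m : ℕ) (s : ℤ) : ℝ :=
  qBinomZ q (2 * m + c) (m - s) / ((q : ℝ) ^ (m ^ 2 + c * m) * KqTrunc q (2 * m + c))

theorem qBinomZ_div_Sq_eq (hq : 1 < q) (c m : ℕ) (r : ℤ) :
    qBinomZ q (2 * m + c) (m - r) / Sq q (2 * m + c)
      = scaledQBinom q c m r / ∑' s : ℤ, scaledQBinom q c m s := by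
  have hC : (q : ℝ) ^ (m ^ 2 + c * m) * KqTrunc q (2 * m + c) ≠ 0 :=
    mul_ne_zero (by positivity) (KqTrunc_pos hq _).ne'
  rw [Sq_eq_tsum_qBinomZ, ← (Equiv.subLeft (m : ℤ)).tsum_eq]
  simp only [scaledQBinom, tsum_div_const, Equiv.subLeft_apply]
  rw [div_div_div_cancel_right₀ hC]

theorem scaledQBinom_eq (hq : 1 < q) {c m : ℕ} {s : ℤ} (h₁ : -(m : ℤ) - c ≤ s) (h₂ : s ≤ m) :
    scaledQBinom q c m s = (q : ℝ) ^ (-(s ^ 2 + c * s)) /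
      (KqTrunc q (m - s).toNat * KqTrunc q (m + c + s).toNat) := by
  set k := ((m : ℤ) - s).toNat with hk
  have hkn : k ≤ 2 * m + c := by omega
  have hnk : 2 * m + c - k = ((m : ℤ) + c + s).toNat := by omega
  have hexp : ((k * (2 * m + c - k) : ℕ) : ℤ) = ((m ^ 2 + c * m : ℕ) : ℤ) + -(s ^ 2 + c * s) := by
    have hk' : (k : ℤ) = m - s := by omega
    have hnk' : ((2 * m + c - k : ℕ) : ℤ) = m + c + s := by omega
    rw [Nat.cast_mul, hk', hnk']
    push_cast
    ring
  have hpow : (q : ℝ) ^ (k * (2 * m + c - k))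
      = (q : ℝ) ^ (m ^ 2 + c * m) * (q : ℝ) ^ (-(s ^ 2 + c * s)) := by
    rw [← zpow_natCast, hexp, zpow_add₀ (by positivity), zpow_natCast]
  rw [scaledQBinom, qBinomZ, if_pos (by omega), qBinom_eq hq hkn, hpow, hnk]
  field_simp [(KqTrunc_pos hq (2 * m + c)).ne']

theorem norm_scaledQBinom_le (hq : 1 < q) (c m : ℕ) (s : ℤ) :
    ‖scaledQBinom q c m s‖ ≤ 16 * (q : ℝ) ^ (-(s ^ 2 + c * s)) := by
  by_cases hs : -(m : ℤ) - c ≤ s ∧ s ≤ m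
  · have h₁ := quarter_le_KqTrunc hq ((m : ℤ) - s).toNat
    have h₂ := quarter_le_KqTrunc hq ((m : ℤ) + c + s).toNat
    rw [scaledQBinom_eq hq hs.1 hs.2, Real.norm_of_nonneg (by positivity),
      div_le_iff₀ (by positivity)]
    have hw : 0 ≤ (q : ℝ) ^ (-(s ^ 2 + c * s)) := by positivity
    nlinarith [mul_le_mul h₁ h₂ (by norm_num) (by linarith)]
  · rw [scaledQBinom, qBinomZ, if_neg (by omega)]
    simp only [zero_div, norm_zero]
    positivity

theorem tendsto_scaledQBinom (hq : 1 < q) (c : ℕ) (s : ℤ) :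
    Tendsto (fun m => scaledQBinom q c m s) atTop
      (𝓝 ((q : ℝ) ^ (-(s ^ 2 + c * s)) / (Kq q * Kq q))) := by
  have hK : ∀ t : ℤ, Tendsto (fun m : ℕ => KqTrunc q ((m : ℤ) + t).toNat) atTop (𝓝 (Kq q)) :=
    fun t => (tendsto_KqTrunc hq).comp <|
      tendsto_atTop_atTop.2 fun b => ⟨b + t.natAbs, fun m hm => by omega⟩
  have hlim := tendsto_const_nhds (x := (q : ℝ) ^ (-(s ^ 2 + c * s))) |>.div
    ((hK (-s)).mul (hK (c + s))) (mul_pos (Kq_pos hq) (Kq_pos hq)).ne'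
  refine hlim.congr' ?_
  filter_upwards [eventually_ge_atTop s.natAbs] with m hm
  rw [scaledQBinom_eq hq (by omega) (by omega)]
  simp only [Pi.div_apply, sub_eq_add_neg, add_assoc]

theorem tendsto_qBinomZ_div_Sq (hq : 1 < q) (c : ℕ) (r : ℤ) :
    Tendsto (fun m : ℕ => qBinomZ q (2 * m + c) (m - r) / Sq q (2 * m + c)) atTop
      (𝓝 ((q : ℝ) ^ (-(r ^ 2 + c * r)) / ∑' s : ℤ, (q : ℝ) ^ (-(s ^ 2 + c * s)))) := by
  have hsum := summable_zpow_neg_sq_add_mul (by exact_mod_cast hq : (1 : ℝ) < q) c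
  have hK : Kq q * Kq q ≠ 0 := (mul_pos (Kq_pos hq) (Kq_pos hq)).ne'
  have htheta : 0 < ∑' s : ℤ, (q : ℝ) ^ (-(s ^ 2 + c * s)) :=
    hsum.tsum_pos (fun s => by positivity) 0 (by simp)
  have h := tendsto_div_tsum_of_dominated_convergence (hsum.mul_left 16)
    (tendsto_scaledQBinom hq c) (.of_forall (norm_scaledQBinom_le hq c))
    (by rw [tsum_div_const]; exact div_ne_zero htheta.ne' hK) r
  rw [tsum_div_const, div_div_div_cancel_right₀ hK] at h
  simpa only [qBinomZ_div_Sq_eq hq] using h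

end QAnalogues

theorem stmt18 (q : ℕ) (hq : IsPrimePow q) (r : ℤ) :
    Tendsto (fun m : ℕ => qBinomZ q (2 * m) ((m : ℤ) - r) / Sq q (2 * m))
      atTop (𝓝 ((q : ℝ) ^ (-(r ^ 2)) / theta3 ((q : ℝ))⁻¹)) ∧
    Tendsto (fun m : ℕ => qBinomZ q (2 * m + 1) ((m : ℤ) - r) / Sq q (2 * m + 1))
      atTop (𝓝 ((q : ℝ) ^ (-(((r : ℝ) + 1 / 2) ^ 2)) / theta2 ((q : ℝ))⁻¹)) := by
  have hq0 : (0 : ℝ) < q := by exact_mod_cast hq.pos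
  constructor
  · simpa [theta3_inv_eq] using tendsto_qBinomZ_div_Sq hq.one_lt 0 r
  · rw [rpow_neg_add_half_sq hq0, theta2_inv_eq hq0,
      mul_div_mul_left _ _ (Real.rpow_pos_of_pos hq0 _).ne']
    simpa using tendsto_qBinomZ_div_Sq hq.one_lt 1 r
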